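/- Let p ≥ 11 be a prime with p ≡ 1 (mod 4). Then the ratio E(G_p)/E₀ satisfies E(G_p)/E₀ > (p^{3/2}/2) / ((p/2)(√p + 2)) = √p/(√p + 2); in particular, this ratio tends to 1 as p → ∞ along primes p ≡ 1 (mod 4). -/

import Mathlib

/-- The adjacency matrix of a simple graph over `ℝ` is Hermitian. -/
theorem SimpleGraph.adjMatrix_isHermitian {V : Type*} [Fintype V] (G : SimpleGraph V)
    [DecidableRel G.Adj] : (G.adjMatrix ℝ).IsHermitian := by
  rw [Matrix.IsHermitian, Matrix.conjTranspose_eq_transpose_of_trivial]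
  exact SimpleGraph.isSymm_adjMatrix G

/-- The eigenvalues of the (real, symmetric) adjacency matrix of a simple graph,
indexed by the vertex set (listed with multiplicity). -/
noncomputable def SimpleGraph.adjEigenvalues {V : Type*} [Fintype V] [DecidableEq V]
    (G : SimpleGraph V) : V → ℝ :=
  letI := Classical.decRel G.Adj
  (G.adjMatrix_isHermitian).eigenvalues

/-- The energy of a simple graph: the sum of the absolute values of the
eigenvalues of its adjacency matrix. -/
noncomputable def SimpleGraph.energy {V : Type*} [Fintype V] [DecidableEq V]
    (G : SimpleGraph V) : ℝ :=
  ∑ v, |G.adjEigenvalues v|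

/-- The Paley graph of order `p` (for a prime `p ≡ 1 (mod 4)`): the vertices are
the elements of `GF(p) = ZMod p`, and two distinct vertices are adjacent iff their
difference is a (nonzero) square in `GF(p)`. -/
def paleyGraph (p : ℕ) [Fact p.Prime] (hp : p % 4 = 1) : SimpleGraph (ZMod p) where
  Adj x y := x ≠ y ∧ IsSquare (x - y)
  symm := ⟨by
    rintro x y ⟨hne, hsq⟩
    refine ⟨hne.symm, ?_⟩
    have h1 : IsSquare (-1 : ZMod p) := ZMod.exists_sq_eq_neg_one_iff.2 (by omega)
    simpa [neg_one_mul, neg_sub] using h1.mul hsq⟩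
  loopless := ⟨fun x h => h.1 rfl⟩

instance paleyGraph.instDecidableRelAdj (p : ℕ) [Fact p.Prime] {hp : p % 4 = 1} :
    DecidableRel (paleyGraph p hp).Adj := fun _ _ => instDecidableAnd

/-- `E₀ = k + √(k(n-1)(n-k))` evaluated for the `(p-1)/2`-regular Paley graph on
`n = p` vertices: `E₀ = (p-1)/2 + √(((p-1)/2)(p-1)(p-(p-1)/2))`. -/
noncomputable def paleyE0 (p : ℕ) : ℝ :=
  ((p : ℝ) - 1) / 2 +
    Real.sqrt ((((p : ℝ) - 1) / 2) * ((p : ℝ) - 1) * ((p : ℝ) - ((p : ℝ) - 1) / 2))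

/-! With `k = (p - 1) / 2` and `χ` the quadratic character of `𝔽_p`, the matrix `S = 2A + 1` has
entries `1 + χ(x - y)`. The Jacobi sum `J(χ, χ) = -χ(-1) = -1` gives `S² = pI + (p - 1)J` and
`SJ = pJ`, hence `(A - k)((2A + 1)² - p) = 0`: every eigenvalue `λ` of `G_p` is `k` or
`(±√p - 1)/2`. Each of these satisfies `k - λ ≤ √p |λ|`, so summing over the spectrum, whose sum is
the trace `0`, gives `p k ≤ √p E(G_p)`. Since `E₀ = k (1 + √(p + 1))` and `√(p + 1) < √p + 1`,
this yields `E(G_p)/E₀ > √p/(√p + 2)`, which tends to `1`. -/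

open Finset Matrix Polynomial Filter Topology

theorem Matrix.IsHermitian.eval_eigenvalues_eq_zero {𝕜 n : Type*} [RCLike 𝕜] [Fintype n]
    [DecidableEq n] {A : Matrix n n 𝕜} (hA : A.IsHermitian) {q : ℝ[X]} (hq : aeval A q = 0)
    (i : n) : q.eval (hA.eigenvalues i) = 0 := by
  have : Nonempty n := ⟨i⟩
  simpa [hq, spectrum.zero_eq] using
    spectrum.subset_polynomial_aeval A q ⟨_, hA.eigenvalues_mem_spectrum_real i, rfl⟩

namespace SimpleGraph

variable {V : Type*} [Fintype V] [DecidableEq V] (G : SimpleGraph V)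

theorem sum_adjEigenvalues : ∑ v, G.adjEigenvalues v = 0 := by
  classical
  simpa [adjEigenvalues] using G.adjMatrix_isHermitian.trace_eq_sum_eigenvalues.symm

theorem card_mul_le_mul_energy {k c : ℝ}
    (h : ∀ v, k - G.adjEigenvalues v ≤ c * |G.adjEigenvalues v|) :
    Fintype.card V * k ≤ c * G.energy := by
  calc Fintype.card V * k = ∑ v, (k - G.adjEigenvalues v) := by
        simp [Finset.sum_sub_distrib, G.sum_adjEigenvalues]
    _ ≤ ∑ v, c * |G.adjEigenvalues v| := Finset.sum_le_sum fun v _ => h v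
    _ = c * G.energy := by rw [energy, Finset.mul_sum]

end SimpleGraph

theorem sub_le_mul_abs_of_eq_or_sq_eq {s μ : ℝ} (hs : 0 ≤ s)
    (hμ : μ = (s ^ 2 - 1) / 2 ∨ (2 * μ + 1) ^ 2 = s ^ 2) : (s ^ 2 - 1) / 2 - μ ≤ s * |μ| := by
  rcases hμ with rfl | hμ
  · simp only [sub_self]; positivity
  · rcases sq_eq_sq_iff_eq_or_eq_neg.1 hμ with h | h
    · nlinarith [mul_le_mul_of_nonneg_left (le_abs_self μ) hs]
    · nlinarith [mul_le_mul_of_nonneg_left (neg_le_abs μ) hs]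

theorem rpow_three_halves_div_eq_sqrt_div {x : ℝ} (hx : 0 ≤ x) :
    (x ^ ((3 : ℝ) / 2) / 2) / ((x / 2) * (√x + 2)) = √x / (√x + 2) := by
  rcases hx.eq_or_lt with rfl | hx
  · simp
  rw [show (3 : ℝ) / 2 = 1 + 1 / 2 by norm_num, Real.rpow_add hx, Real.rpow_one,
    ← Real.sqrt_eq_rpow]
  field_simp

theorem tendsto_sqrt_div_sqrt_add_two : Tendsto (fun x : ℝ => √x / (√x + 2)) atTop (𝓝 1) := by
  have h : Tendsto (fun y : ℝ => 1 - 2 / (y + 2)) atTop (𝓝 (1 - 0)) :=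
    tendsto_const_nhds.sub
      (tendsto_const_nhds.div_atTop (tendsto_atTop_add_const_right _ 2 tendsto_id))
  rw [sub_zero] at h
  refine (h.comp Real.tendsto_sqrt_atTop).congr fun x => ?_
  have : √x + 2 ≠ 0 := by positivity
  simp only [Function.comp_apply]
  field_simp
  ring

namespace MulChar

variable {F R : Type*} [Field F] [CommRing R]

theorem apply_mul_inv_apply {χ : MulChar F R} {a : F} (ha : a ≠ 0) : χ a * χ⁻¹ a = 1 := by
  rw [inv_apply', ← map_mul, mul_inv_cancel₀ ha, map_one]

variable [Fintype F]

theorem sum_apply_sub_eq_zero [IsDomain R] {χ : MulChar F R} (hχ : χ ≠ 1) (x : F) :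
    ∑ z, χ (x - z) = 0 :=
  ((Equiv.subLeft x).sum_comp χ).trans (sum_eq_zero_of_ne_one hχ)

theorem sum_apply_sub_mul_inv_apply_sub [IsDomain R] {χ : MulChar F R} (hχ : χ ≠ 1) {x y : F}
    (hxy : x ≠ y) : ∑ z, χ (x - z) * χ⁻¹ (z - y) = -χ (-1) := by
  have hd : x - y ≠ 0 := sub_ne_zero.2 hxy
  rw [← jacobiSum_nontrivial_inv hχ, jacobiSum_comm, jacobiSum,
    ← ((Equiv.mulLeft₀ _ hd).trans (Equiv.addLeft y)).sum_comp]
  refine Finset.sum_congr rfl fun w _ => ?_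
  have h1 : x - (y + (x - y) * w) = (x - y) * (1 - w) := by ring
  have h2 : y + (x - y) * w - y = (x - y) * w := by ring
  simp only [Equiv.trans_apply, Equiv.mulLeft₀_apply, Equiv.coe_addLeft, h1, h2, map_mul]
  linear_combination (χ⁻¹ w * χ (1 - w)) * apply_mul_inv_apply (χ := χ) hd

theorem sum_apply_sub_mul_inv_apply_sub_self [DecidableEq F] (χ : MulChar F R) (x : F) :
    ∑ z, χ (x - z) * χ⁻¹ (z - x) = χ (-1) * (Fintype.card F - 1) := by
  have h : ∀ z, χ (x - z) * χ⁻¹ (z - x) = if z = x then 0 else χ (-1) := by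
    intro z
    split_ifs with hz
    · simp [hz]
    · rw [show x - z = -1 * (z - x) by ring, map_mul, mul_assoc,
        apply_mul_inv_apply (sub_ne_zero.2 hz), mul_one]
  simp only [h, Finset.sum_ite, Finset.sum_const_zero, zero_add, Finset.sum_const]
  rw [Finset.filter_ne', Finset.card_erase_of_mem (Finset.mem_univ x), Finset.card_univ,
    nsmul_eq_mul, Nat.cast_pred Fintype.card_pos, mul_comm]

variable [IsDomain R] {χ : MulChar F R}

theorem of_one_add_apply_sub_mul_allOnes (hχ : χ ≠ 1) :
    (of fun x y => 1 + χ (x - y)) * (of fun _ _ => (1 : R)) =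
      (Fintype.card F : R) • of fun _ _ => (1 : R) := by
  ext x y
  simp [Matrix.mul_apply, Finset.sum_add_distrib, sum_apply_sub_eq_zero hχ]

theorem of_one_add_apply_sub_mul_self [DecidableEq F] (hχ : χ ≠ 1) (hχq : χ.IsQuadratic)
    (hχ1 : χ (-1) = 1) :
    (of fun x y => 1 + χ (x - y)) * (of fun x y => 1 + χ (x - y)) =
      (Fintype.card F : R) • 1 + ((Fintype.card F : R) - 1) • of fun _ _ => (1 : R) := by
  ext x y
  have hr : ∑ z, χ (z - y) = 0 :=
    ((Equiv.subRight y).sum_comp χ).trans (sum_eq_zero_of_ne_one hχ)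
  have hcross :
      ∑ z, χ (x - z) * χ (z - y) = if x = y then (Fintype.card F : R) - 1 else -1 := by
    split_ifs with hxy
    · simpa [hxy, hχq.inv, hχ1] using sum_apply_sub_mul_inv_apply_sub_self χ y
    · simpa [hχq.inv, hχ1] using sum_apply_sub_mul_inv_apply_sub hχ hxy
  simp only [Matrix.mul_apply, of_apply, add_mul, mul_add, one_mul, mul_one, Finset.sum_add_distrib,
    sum_apply_sub_eq_zero hχ, hr, hcross]
  split_ifs with hxy <;> simp [hxy, sub_eq_add_neg]

end MulChar

noncomputable def realQuadraticChar (F : Type*) [Field F] [Fintype F] [DecidableEq F] :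
    MulChar F ℝ :=
  (quadraticChar F).ringHomComp (Int.castRingHom ℝ)

namespace realQuadraticChar

variable {F : Type*} [Field F] [Fintype F] [DecidableEq F]

theorem isQuadratic : (realQuadraticChar F).IsQuadratic :=
  quadraticChar_isQuadratic F |>.comp _

theorem ne_one (hF : ringChar F ≠ 2) : realQuadraticChar F ≠ 1 :=
  (MulChar.ringHomComp_ne_one_iff Int.cast_injective).2 (quadraticChar_ne_one hF)

theorem apply_eq_one {a : F} (ha : a ≠ 0) (hsq : IsSquare a) : realQuadraticChar F a = 1 := by
  simp [realQuadraticChar, MulChar.ringHomComp_apply, (quadraticChar_one_iff_isSquare ha).2 hsq]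

theorem apply_eq_neg_one {a : F} (hsq : ¬IsSquare a) : realQuadraticChar F a = -1 := by
  simp [realQuadraticChar, MulChar.ringHomComp_apply, quadraticChar_neg_one_iff_not_isSquare.2 hsq]

theorem zmod_apply_neg_one {p : ℕ} [Fact p.Prime] (hp : p % 4 = 1) :
    realQuadraticChar (ZMod p) (-1) = 1 :=
  apply_eq_one (neg_ne_zero.2 one_ne_zero) (ZMod.exists_sq_eq_neg_one_iff.2 (by omega))

end realQuadraticChar

namespace paleyGraph

variable {p : ℕ} [Fact p.Prime] {hp : p % 4 = 1}

theorem two_smul_adjMatrix_add_one [DecidableRel (paleyGraph p hp).Adj] :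
    (2 : ℝ) • (paleyGraph p hp).adjMatrix ℝ + 1 =
      of fun x y => 1 + realQuadraticChar (ZMod p) (x - y) := by
  ext x y
  by_cases hxy : x = y
  · simp [hxy, MulChar.map_zero]
  by_cases hsq : IsSquare (x - y)
  · have hadj : (paleyGraph p hp).Adj x y := ⟨hxy, hsq⟩
    simp [hxy, hadj, realQuadraticChar.apply_eq_one (sub_ne_zero.2 hxy) hsq]
    norm_num
  · have hadj : ¬(paleyGraph p hp).Adj x y := fun h => hsq h.2
    simp [hxy, hadj, realQuadraticChar.apply_eq_neg_one hsq]

theorem aeval_adjMatrix_eq_zero [DecidableRel (paleyGraph p hp).Adj] :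
    aeval ((paleyGraph p hp).adjMatrix ℝ)
      ((X - C (((p : ℝ) - 1) / 2)) * ((2 * X + 1) ^ 2 - C (p : ℝ))) = 0 := by
  set A := (paleyGraph p hp).adjMatrix ℝ
  set S : Matrix (ZMod p) (ZMod p) ℝ := of fun x y => 1 + realQuadraticChar (ZMod p) (x - y)
  have hS : (2 : ℝ) • A + 1 = S := two_smul_adjMatrix_add_one
  have h2A : 2 * A + 1 = S := by rw [← hS, two_mul, two_smul]
  have hA : A - (((p : ℝ) - 1) / 2) • 1 = (2 : ℝ)⁻¹ • (S - (p : ℝ) • 1) := by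
    rw [← hS]; module
  have hχ := realQuadraticChar.ne_one (F := ZMod p) (by rw [ZMod.ringChar_zmod_n]; omega)
  simp only [map_mul, map_sub, map_add, map_pow, aeval_X, aeval_C, map_one, map_ofNat,
    Algebra.algebraMap_eq_smul_one]
  rw [h2A, hA, sq, MulChar.of_one_add_apply_sub_mul_self hχ realQuadraticChar.isQuadratic
    (realQuadraticChar.zmod_apply_neg_one hp), ZMod.card, add_sub_cancel_left, smul_mul,
    Matrix.mul_smul, Matrix.sub_mul, MulChar.of_one_add_apply_sub_mul_allOnes hχ, ZMod.card,
    smul_mul, one_mul, sub_self, smul_zero, smul_zero]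

theorem adjEigenvalues_eq_or_sq_eq (v : ZMod p) :
    (paleyGraph p hp).adjEigenvalues v = ((p : ℝ) - 1) / 2 ∨
      (2 * (paleyGraph p hp).adjEigenvalues v + 1) ^ 2 = p := by
  -- `adjEigenvalues` is computed with the classical decidability instance
  let := Classical.decRel (paleyGraph p hp).Adj
  have h := (paleyGraph p hp).adjMatrix_isHermitian.eval_eigenvalues_eq_zero
    aeval_adjMatrix_eq_zero v
  simp only [eval_mul, eval_sub, eval_X, eval_C, eval_pow, eval_add, eval_one, eval_ofNat] at h
  rcases mul_eq_zero.1 h with h | h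
  · exact .inl (sub_eq_zero.1 h)
  · exact .inr (sub_eq_zero.1 h)

theorem half_pred_mul_sqrt_le_energy : ((p : ℝ) - 1) / 2 * √p ≤ (paleyGraph p hp).energy := by
  have hs : √(p : ℝ) ^ 2 = p := Real.sq_sqrt p.cast_nonneg
  have hbound := (paleyGraph p hp).card_mul_le_mul_energy (k := ((p : ℝ) - 1) / 2) (c := √p)
    fun v => by
      simpa [hs] using sub_le_mul_abs_of_eq_or_sq_eq (Real.sqrt_nonneg p)
        (by rw [hs]; exact adjEigenvalues_eq_or_sq_eq v)
  rw [ZMod.card] at hbound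
  have hs0 : 0 < √(p : ℝ) := Real.sqrt_pos.2 (by exact_mod_cast (Fact.out : p.Prime).pos)
  refine le_of_mul_le_mul_left ?_ hs0
  nlinarith

end paleyGraph

theorem paleyE0_eq {p : ℕ} (hp : 0 < p) : paleyE0 p = ((p : ℝ) - 1) / 2 * (1 + √(p + 1)) := by
  have hk : 0 ≤ ((p : ℝ) - 1) / 2 := by
    have : (1 : ℝ) ≤ p := by exact_mod_cast hp
    linarith
  rw [paleyE0, show ((p : ℝ) - 1) / 2 * ((p : ℝ) - 1) * ((p : ℝ) - ((p : ℝ) - 1) / 2) =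
    (((p : ℝ) - 1) / 2) ^ 2 * (p + 1) by ring, Real.sqrt_mul (sq_nonneg _), Real.sqrt_sq hk]
  ring

theorem paleyGraph.sqrt_div_sqrt_add_two_lt_energy_div_paleyE0 {p : ℕ} [hp1 : Fact p.Prime]
    (hp : p % 4 = 1) : √p / (√p + 2) < (paleyGraph p hp).energy / paleyE0 p := by
  have hp2 : (2 : ℝ) ≤ p := by exact_mod_cast hp1.out.two_le
  have hk : 0 < ((p : ℝ) - 1) / 2 := by linarith
  have hs0 : 0 < √(p : ℝ) := Real.sqrt_pos.2 (by linarith)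
  have hs : √(p : ℝ) ^ 2 = p := Real.sq_sqrt (by linarith)
  have ht : √((p : ℝ) + 1) < √p + 1 := (Real.sqrt_lt' (by linarith)).2 (by nlinarith)
  have hE0 := paleyE0_eq hp1.out.pos
  calc √p / (√p + 2) < √p / (1 + √(p + 1)) :=
        div_lt_div_of_pos_left hs0 (by positivity) (by linarith)
    _ = ((p : ℝ) - 1) / 2 * √p / paleyE0 p := by rw [hE0, mul_div_mul_left _ _ hk.ne']
    _ ≤ (paleyGraph p hp).energy / paleyE0 p :=
      div_le_div_of_nonneg_right half_pred_mul_sqrt_le_energy (by rw [hE0]; positivity)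

theorem energy_paleyGraph_ratio_general (p : ℕ) (hp1 : p.Prime) (hp : p % 4 = 1) :
    (haveI : Fact p.Prime := ⟨hp1⟩;
      (paleyGraph p hp).energy / paleyE0 p >
        ((p : ℝ) ^ ((3 : ℝ) / 2) / 2) / (((p : ℝ) / 2) * (Real.sqrt p + 2)) ∧
      ((p : ℝ) ^ ((3 : ℝ) / 2) / 2) / (((p : ℝ) / 2) * (Real.sqrt p + 2)) =
        Real.sqrt p / (Real.sqrt p + 2)) ∧
    (∀ ε : ℝ, 0 < ε → ∃ N : ℕ, ∀ q : ℕ, N ≤ q → ∀ (hq1 : q.Prime) (hq : q % 4 = 1),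
      haveI : Fact q.Prime := ⟨hq1⟩;
      1 - ε < (paleyGraph q hq).energy / paleyE0 q) := by
  have : Fact p.Prime := ⟨hp1⟩
  have hratio := rpow_three_halves_div_eq_sqrt_div p.cast_nonneg
  refine ⟨⟨?_, hratio⟩, fun ε hε => ?_⟩
  · rw [gt_iff_lt, hratio]
    exact paleyGraph.sqrt_div_sqrt_add_two_lt_energy_div_paleyE0 hp
  · obtain ⟨N, hN⟩ := eventually_atTop.1 <|
      (tendsto_sqrt_div_sqrt_add_two.comp tendsto_natCast_atTop_atTop).eventually
        (lt_mem_nhds (by linarith : 1 - ε < 1))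
    refine ⟨N, fun q hq hq1 hq4 => ?_⟩
    have : Fact q.Prime := ⟨hq1⟩
    exact (hN q hq).trans (paleyGraph.sqrt_div_sqrt_add_two_lt_energy_div_paleyE0 hq4)

/-- For a prime `p ≥ 11` with `p ≡ 1 (mod 4)`,
`E(G_p)/E₀ > (p^(3/2)/2)/((p/2)(√p+2)) = √p/(√p+2)`; in particular the ratio
`E(G_p)/E₀` tends to `1` as `p → ∞` along primes `p ≡ 1 (mod 4)`. -/
theorem energy_paleyGraph_ratio (p : ℕ) (hp1 : p.Prime) (hp11 : 11 ≤ p) (hp : p % 4 = 1) :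
    (haveI : Fact p.Prime := ⟨hp1⟩;
      (paleyGraph p hp).energy / paleyE0 p >
        ((p : ℝ) ^ ((3 : ℝ) / 2) / 2) / (((p : ℝ) / 2) * (Real.sqrt p + 2)) ∧
      ((p : ℝ) ^ ((3 : ℝ) / 2) / 2) / (((p : ℝ) / 2) * (Real.sqrt p + 2)) =
        Real.sqrt p / (Real.sqrt p + 2)) ∧
    (∀ ε : ℝ, 0 < ε → ∃ N : ℕ, ∀ q : ℕ, N ≤ q → ∀ (hq1 : q.Prime) (hq : q % 4 = 1),
      haveI : Fact q.Prime := ⟨hq1⟩;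
      1 - ε < (paleyGraph q hq).energy / paleyE0 q) :=
  energy_paleyGraph_ratio_general p hp1 hp
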